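/- A generalized directed hyperedge with a gap-free numbering is uniquely determined by its biclique encoding: if (x, f) and (y, g) are hyperedges with surjective-onto-an-initial-segment numberings f : x → {1,…,k}, g : y → {1,…,m} whose associated consecutive-level edge sets {(u,v) | f(v) = f(u)+1} and {(u,v) | g(v) = g(u)+1} coincide, and whose level-1 sets f⁻¹(1) and g⁻¹(1) coincide, then x = y, k = m, and f = g. -/
import Mathlib


/-- The numbering `f` of a hyperedge with node set `x` is gap-free onto `{1,…,k}`:
it takes values in `{1,…,k}` on `x` and attains every value in `{1,…,k}`. -/
def GapFree (x : Set ℕ) (f : ℕ → ℕ) (k : ℕ) : Prop :=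
  (∀ u ∈ x, f u ∈ Set.Icc 1 k) ∧ ∀ i ∈ Set.Icc 1 k, ∃ u ∈ x, f u = i

/-- The biclique encoding of a numbered hyperedge: edges between consecutive levels. -/
def biclique (x : Set ℕ) (f : ℕ → ℕ) : Set (ℕ × ℕ) :=
  {p | p.1 ∈ x ∧ p.2 ∈ x ∧ f p.2 = f p.1 + 1}

/-- A gap-free numbered hyperedge is uniquely determined by its biclique encoding
together with its level-1 set: node sets, numbers of levels and numberings agree. -/
theorem biclique_encoding_determines (x y : Set ℕ) (f g : ℕ → ℕ) (k m : ℕ)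
    (hf : GapFree x f k) (hg : GapFree y g m)
    (hB : biclique x f = biclique y g)
    (h1 : {u ∈ x | f u = 1} = {u ∈ y | g u = 1}) :
    x = y ∧ k = m ∧ Set.EqOn f g x := by
  obtain ⟨hf1, hf2⟩ := hf
  obtain ⟨hg1, hg2⟩ := hg
  have key : ∀ i, 1 ≤ i → {u ∈ x | f u = i} = {u ∈ y | g u = i} := by
    intro i hi
    induction i, hi using Nat.le_induction with
    | base => exact h1
    | succ i hi ih =>
      by_cases hne : ({u ∈ x | f u = i} : Set ℕ).Nonempty
      · obtain ⟨u, hux, hfu⟩ := hne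
        have huy : u ∈ {u ∈ y | g u = i} := ih ▸ (⟨hux, hfu⟩ : u ∈ {u ∈ x | f u = i})
        ext v
        constructor
        · rintro ⟨hvx, hfv⟩
          have hmem : (u, v) ∈ biclique x f := ⟨hux, hvx, show f v = f u + 1 by omega⟩
          rw [hB] at hmem
          obtain ⟨_, hvy, hgv⟩ := hmem
          have hgv' : g v = g u + 1 := hgv
          exact ⟨hvy, by have := huy.2; omega⟩
        · rintro ⟨hvy, hgv⟩
          have hmem : (u, v) ∈ biclique y g :=
            ⟨huy.1, hvy, show g v = g u + 1 by have := huy.2; omega⟩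
          rw [← hB] at hmem
          obtain ⟨_, hvx, hfv⟩ := hmem
          have hfv' : f v = f u + 1 := hfv
          exact ⟨hvx, by omega⟩
      · have hne' : ¬ ({u ∈ y | g u = i} : Set ℕ).Nonempty := by rw [← ih]; exact hne
        have hik : k < i := by
          by_contra h
          obtain ⟨u, hu, hfu⟩ := hf2 i ⟨hi, by omega⟩
          exact hne ⟨u, hu, hfu⟩
        have him : m < i := by
          by_contra h
          obtain ⟨u, hu, hgu⟩ := hg2 i ⟨hi, by omega⟩
          exact hne' ⟨u, hu, hgu⟩
        ext v
        constructor
        · rintro ⟨hvx, hfv⟩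
          have := hf1 v hvx
          simp [Set.mem_Icc] at this
          omega
        · rintro ⟨hvy, hgv⟩
          have := hg1 v hvy
          simp [Set.mem_Icc] at this
          omega
  have hxy : x = y := by
    ext u
    constructor
    · intro hu
      have hi := hf1 u hu
      have hm : u ∈ {v ∈ y | g v = f u} :=
        (key (f u) hi.1) ▸ (⟨hu, rfl⟩ : u ∈ {v ∈ x | f v = f u})
      exact hm.1
    · intro hu
      have hi := hg1 u hu
      have hm : u ∈ {v ∈ x | f v = g u} :=
        (key (g u) hi.1).symm ▸ (⟨hu, rfl⟩ : u ∈ {v ∈ y | g v = g u})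
      exact hm.1
  have hkm : k = m := by
    have hkm1 : k ≤ m := by
      by_contra h
      obtain ⟨u, hu, hfu⟩ := hf2 k ⟨by omega, le_refl k⟩
      have hm : u ∈ {v ∈ y | g v = k} :=
        (key k (by omega)) ▸ (⟨hu, hfu⟩ : u ∈ {v ∈ x | f v = k})
      have h2 := hm.2
      have := hg1 u hm.1
      simp [Set.mem_Icc] at this
      omega
    have hmk1 : m ≤ k := by
      by_contra h
      obtain ⟨u, hu, hgu⟩ := hg2 m ⟨by omega, le_refl m⟩
      have hm : u ∈ {v ∈ x | f v = m} :=
        (key m (by omega)).symm ▸ (⟨hu, hgu⟩ : u ∈ {v ∈ y | g v = m})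
      have h2 := hm.2
      have := hf1 u hm.1
      simp [Set.mem_Icc] at this
      omega
    omega
  refine ⟨hxy, hkm, ?_⟩
  intro u hu
  have hi := hf1 u hu
  have hm : u ∈ {v ∈ y | g v = f u} :=
    (key (f u) hi.1) ▸ (⟨hu, rfl⟩ : u ∈ {v ∈ x | f v = f u})
  exact hm.2.symm
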